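/- Let P and Q be Borel probability measures on ℝ. The comonotone coupling 𝔓^com, defined as the pushforward of Lebesgue measure on (0,1) under the map x ↦ (F_P^←(x), F_Q^←(x)), has first marginal P and second marginal Q, and its joint distribution function is F_{𝔓^com}(u,v) = min{F_P(u), F_Q(v)} for all u, v ∈ ℝ. Consequently, for every continuous quasi-antitone cost ψ̃ : ℝ × ℝ → [0,∞), the minimum of ∫ ψ̃ dπ over all couplings π of P and Q is attained at 𝔓^com and equals ∫_{(0,1)} ψ̃(F_P^←(x), F_Q^←(x)) dλ_L(x). -/

import Mathlib

/-!
On `(0,1)` the quantile function is a Galois inverse of the distribution function: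
`F_P^←(x) ≤ z ↔ x ≤ F_P(z)`. Hence `F_P^←` pushes Lebesgue measure on `(0,1)` to `P`, and
`{F_P^← ≤ u} ∩ {F_Q^← ≤ v} ∩ (0,1) = (0, min (F_P u) (F_Q v)] ∩ (0,1)`, which gives the joint
distribution function of `𝔓^com`; every coupling `π` satisfies the Fréchet bound
`π ((-∞,u] × (-∞,v]) ≤ min (F_P u) (F_Q v)`.

For marginals supported in a compact interval, replace `ψ̃` by its values at the grid node just
above each point. Summation by parts writes this step function as marginal terms plus
`∑ Δᵢⱼ 𝟙 ((-∞,sᵢ] × (-∞,sⱼ])` with mixed differences `Δᵢⱼ ≤ 0` by submodularity, so among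
couplings with the given marginals its integral is smallest for the largest joint distribution
function, i.e. for `𝔓^com`; uniform continuity lets the mesh go to zero.

In general, move the mass of `π` outside `[-n,n]²` to the origin. The marginals move by at most
`π ([-n,n]²ᶜ)` in Kolmogorov distance, so their quantile functions converge at every continuity
point of `F_P^←`, hence almost everywhere, and Fatou's lemma carries the inequality to the limit.
-/

open Set MeasureTheory
open scoped ENNReal

/-- The quantile function `F_P^←(x) := inf{z ∈ ℝ : F_P(z) ≥ x}` of a Borel
probability measure `P` on `ℝ`, where `F_P(z) := P((−∞,z])`. -/
noncomputable def quantileFn (P : Measure ℝ) (x : ℝ) : ℝ :=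
  sInf {z : ℝ | x ≤ (P (Set.Iic z)).toReal}

/-- The comonotone coupling `𝔓^com` of `P` and `Q`: the pushforward of
Lebesgue measure on `(0,1)` under `x ↦ (F_P^←(x), F_Q^←(x))`. -/
noncomputable def comonotoneCoupling (P Q : Measure ℝ) : Measure (ℝ × ℝ) :=
  (volume.restrict (Set.Ioo (0:ℝ) 1)).map (fun x => (quantileFn P x, quantileFn Q x))

open Filter ProbabilityTheory
open scoped Topology

section quantileFn

variable (P : Measure ℝ) [IsProbabilityMeasure P]

lemma quantileFn_eq_sInf_cdf (x : ℝ) : quantileFn P x = sInf {z | x ≤ cdf P z} := by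
  simp only [quantileFn, cdf_eq_real, measureReal_def]

theorem quantileFn_le_iff {x z : ℝ} (hx : x ∈ Ioo (0 : ℝ) 1) :
    quantileFn P x ≤ z ↔ x ≤ cdf P z := by
  set S := {z | x ≤ cdf P z}
  have hne : S.Nonempty := ((tendsto_cdf_atTop P).eventually (eventually_ge_nhds hx.2)).exists
  obtain ⟨w, hw⟩ := ((tendsto_cdf_atBot P).eventually (eventually_lt_nhds hx.1)).exists
  have hbdd : BddBelow S := ⟨w, fun z hz => le_of_not_gt fun hzw =>
    (hz.trans ((monotone_cdf P) hzw.le)).not_gt hw⟩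
  -- the infimum is attained because the cdf is right-continuous
  have hmem : sInf S ∈ S := by
    refine ge_of_tendsto (((cdf P).right_continuous _).mono Ioi_subset_Ici_self) ?_
    filter_upwards [self_mem_nhdsWithin] with y hy
    obtain ⟨c, hcS, hcy⟩ := exists_lt_of_csInf_lt hne hy
    exact hcS.trans ((monotone_cdf P) hcy.le)
  rw [quantileFn_eq_sInf_cdf]
  exact ⟨fun h => hmem.trans ((monotone_cdf P) h), fun h => csInf_le hbdd h⟩

lemma le_cdf_quantileFn {x : ℝ} (hx : x ∈ Ioo (0 : ℝ) 1) : x ≤ cdf P (quantileFn P x) :=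
  (quantileFn_le_iff P hx).1 le_rfl

theorem monotoneOn_quantileFn : MonotoneOn (quantileFn P) (Ioo 0 1) := fun _ hx _ hy hxy =>
  (quantileFn_le_iff P hx).2 (hxy.trans (le_cdf_quantileFn P hy))

lemma aemeasurable_quantileFn : AEMeasurable (quantileFn P) (volume.restrict (Ioo 0 1)) :=
  aemeasurable_restrict_of_monotoneOn measurableSet_Ioo (monotoneOn_quantileFn P)

end quantileFn

instance : IsProbabilityMeasure (volume.restrict (Ioo (0 : ℝ) 1)) :=
  ⟨by simp [Real.volume_Ioo]⟩

lemma volume_Iic_inter_Ioo {t : ℝ} (h1 : t ≤ 1) :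
    volume (Iic t ∩ Ioo (0 : ℝ) 1) = ENNReal.ofReal t := by
  refine le_antisymm ?_ ?_
  · calc volume (Iic t ∩ Ioo (0 : ℝ) 1) ≤ volume (Ioc 0 t) :=
          measure_mono fun x hx => ⟨hx.2.1, hx.1⟩
      _ = ENNReal.ofReal t := by simp
  · calc ENNReal.ofReal t = volume (Ioo 0 t) := by simp
      _ ≤ volume (Iic t ∩ Ioo (0 : ℝ) 1) :=
          measure_mono fun x hx => ⟨hx.2.le, hx.1, hx.2.trans_le h1⟩

lemma quantileFn_preimage_Iic_inter_Ioo (P : Measure ℝ) [IsProbabilityMeasure P] (z : ℝ) :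
    quantileFn P ⁻¹' Iic z ∩ Ioo 0 1 = Iic (cdf P z) ∩ Ioo 0 1 := by
  ext x
  exact and_congr_left fun hx => quantileFn_le_iff P hx

theorem map_quantileFn (P : Measure ℝ) [IsProbabilityMeasure P] :
    (volume.restrict (Ioo (0 : ℝ) 1)).map (quantileFn P) = P := by
  refine Measure.ext_of_Iic _ _ fun z => ?_
  rw [Measure.map_apply_of_aemeasurable (aemeasurable_quantileFn P) measurableSet_Iic,
    Measure.restrict_apply' measurableSet_Ioo, quantileFn_preimage_Iic_inter_Ioo,
    volume_Iic_inter_Ioo (cdf_le_one P z), ofReal_cdf]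

section comonotoneCoupling

variable (P Q : Measure ℝ) [IsProbabilityMeasure P] [IsProbabilityMeasure Q]

lemma aemeasurable_quantileFn_prod :
    AEMeasurable (fun x => (quantileFn P x, quantileFn Q x)) (volume.restrict (Ioo 0 1)) :=
  (aemeasurable_quantileFn P).prodMk (aemeasurable_quantileFn Q)

theorem comonotoneCoupling_map_fst : (comonotoneCoupling P Q).map Prod.fst = P := by
  rw [comonotoneCoupling, AEMeasurable.map_map_of_aemeasurable measurable_fst.aemeasurable
    (aemeasurable_quantileFn_prod P Q)]
  exact map_quantileFn P

theorem comonotoneCoupling_map_snd : (comonotoneCoupling P Q).map Prod.snd = Q := by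
  rw [comonotoneCoupling, AEMeasurable.map_map_of_aemeasurable measurable_snd.aemeasurable
    (aemeasurable_quantileFn_prod P Q)]
  exact map_quantileFn Q

instance : IsProbabilityMeasure (comonotoneCoupling P Q) :=
  Measure.isProbabilityMeasure_map (aemeasurable_quantileFn_prod P Q)

theorem comonotoneCoupling_Iic_prod_Iic (u v : ℝ) :
    comonotoneCoupling P Q (Iic u ×ˢ Iic v) = min (P (Iic u)) (Q (Iic v)) := by
  have hpre : (fun x => (quantileFn P x, quantileFn Q x)) ⁻¹' (Iic u ×ˢ Iic v) ∩ Ioo 0 1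
      = Iic (min (cdf P u) (cdf Q v)) ∩ Ioo 0 1 := by
    ext x
    simp only [mem_inter_iff, mem_preimage, mem_prod, mem_Iic, le_min_iff]
    exact and_congr_left fun hx => and_congr (quantileFn_le_iff P hx) (quantileFn_le_iff Q hx)
  rw [comonotoneCoupling, Measure.map_apply_of_aemeasurable (aemeasurable_quantileFn_prod P Q)
    (measurableSet_Iic.prod measurableSet_Iic), Measure.restrict_apply' measurableSet_Ioo, hpre,
    volume_Iic_inter_Ioo (min_le_of_left_le (cdf_le_one P u)), ENNReal.ofReal_min, ofReal_cdf,
    ofReal_cdf]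

theorem lintegral_comonotoneCoupling {f : ℝ × ℝ → ℝ≥0∞} (hf : Measurable f) :
    ∫⁻ p, f p ∂(comonotoneCoupling P Q) = ∫⁻ x in Ioo 0 1, f (quantileFn P x, quantileFn Q x) :=
  lintegral_map' hf.aemeasurable (aemeasurable_quantileFn_prod P Q)

end comonotoneCoupling

theorem quantileFn_le_quantileFn_add (P Q : Measure ℝ) [IsProbabilityMeasure P]
    [IsProbabilityMeasure Q] {δ : ℝ} (h : ∀ z, cdf P z ≤ cdf Q z + δ) {x : ℝ}
    (hx : x ∈ Ioo (0 : ℝ) 1) (hxδ : x + δ ∈ Ioo (0 : ℝ) 1) :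
    quantileFn Q x ≤ quantileFn P (x + δ) := by
  rw [quantileFn_le_iff Q hx]
  linarith [le_cdf_quantileFn P hxδ, h (quantileFn P (x + δ))]

theorem tendsto_quantileFn_of_abs_cdf_sub_le (P : Measure ℝ) [IsProbabilityMeasure P]
    (Pn : ℕ → Measure ℝ) [∀ n, IsProbabilityMeasure (Pn n)] {δ : ℕ → ℝ}
    (hδ : Tendsto δ atTop (𝓝 0)) (hcdf : ∀ n z, |cdf (Pn n) z - cdf P z| ≤ δ n)
    {x : ℝ} (hx : x ∈ Ioo (0 : ℝ) 1) (hcont : ContinuousAt (quantileFn P) x) :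
    Tendsto (fun n => quantileFn (Pn n) x) atTop (𝓝 (quantileFn P x)) := by
  have hshift : ∀ σ : ℝ, Tendsto (fun n => x + σ * δ n) atTop (𝓝 x) := fun σ => by
    simpa using tendsto_const_nhds.add (hδ.const_mul σ)
  have hmem : ∀ σ : ℝ, ∀ᶠ n in atTop, x + σ * δ n ∈ Ioo (0 : ℝ) 1 := fun σ =>
    (hshift σ).eventually (Ioo_mem_nhds hx.1 hx.2)
  refine tendsto_of_tendsto_of_tendsto_of_le_of_le' (hcont.tendsto.comp (hshift (-1)))
    (hcont.tendsto.comp (hshift 1)) ?_ ?_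
  · filter_upwards [hmem (-1)] with n hn
    have hx' : x + -1 * δ n + δ n = x := by ring
    have := quantileFn_le_quantileFn_add (Pn n) P
      (fun z => by linarith [(abs_le.1 (hcdf n z)).2]) hn (hx'.symm ▸ hx)
    rwa [hx'] at this
  · filter_upwards [hmem 1] with n hn
    have := quantileFn_le_quantileFn_add P (Pn n)
      (fun z => by linarith [(abs_le.1 (hcdf n z)).1]) hx (by simpa using hn)
    simpa using this

theorem ae_tendsto_quantileFn_of_abs_cdf_sub_le (P : Measure ℝ) [IsProbabilityMeasure P]
    (Pn : ℕ → Measure ℝ) [∀ n, IsProbabilityMeasure (Pn n)] {δ : ℕ → ℝ}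
    (hδ : Tendsto δ atTop (𝓝 0)) (hcdf : ∀ n z, |cdf (Pn n) z - cdf P z| ≤ δ n) :
    ∀ᵐ x ∂(volume.restrict (Ioo (0 : ℝ) 1)),
      Tendsto (fun n => quantileFn (Pn n) x) atTop (𝓝 (quantileFn P x)) := by
  -- a monotone function has only countably many discontinuities
  have hnull : volume {x ∈ Ioo (0 : ℝ) 1 | ¬ContinuousWithinAt (quantileFn P) (Ioo 0 1) x} = 0 :=
    (monotoneOn_quantileFn P).countable_not_continuousWithinAt.measure_zero _
  rw [ae_restrict_iff' measurableSet_Ioo]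
  filter_upwards [measure_eq_zero_iff_ae_notMem.1 hnull] with x hx hxI
  refine tendsto_quantileFn_of_abs_cdf_sub_le P Pn hδ hcdf hxI ?_
  rw [← continuousWithinAt_iff_continuousAt (Ioo_mem_nhds hxI.1 hxI.2)]
  by_contra h
  exact hx ⟨hxI, h⟩

open Finset in
lemma sum_range_ite_le_eq_sub (g : ℕ → ℝ) {k N : ℕ} (hk : k ≤ N) :
    ∑ i ∈ range N, (if k ≤ i then g (i + 1) - g i else 0) = g N - g k := by
  rw [← sum_filter, range_eq_Ico, Ico_filter_le, max_eq_right (Nat.zero_le k),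
    sum_Ico_eq_sub _ hk, sum_range_sub, sum_range_sub]
  ring

def mixedDiff (G : ℕ → ℕ → ℝ) (i j : ℕ) : ℝ := G (i + 1) (j + 1) - G i (j + 1) - G (i + 1) j + G i j

open Finset in
lemma eq_sub_sum_ite_add_sum_mixedDiff (G : ℕ → ℕ → ℝ) {N k l : ℕ} (hk : k ≤ N) (hl : l ≤ N) :
    G k l = G N N - ∑ i ∈ range N, (if k ≤ i then G (i + 1) N - G i N else 0)
      - ∑ j ∈ range N, (if l ≤ j then G N (j + 1) - G N j else 0)
      + ∑ ij ∈ range N ×ˢ range N, (if k ≤ ij.1 ∧ l ≤ ij.2 then mixedDiff G ij.1 ij.2 else 0) := by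
  have hinner : ∀ i, ∑ j ∈ range N, (if k ≤ i ∧ l ≤ j then mixedDiff G i j else 0)
      = if k ≤ i then G (i + 1) N - G (i + 1) l - (G i N - G i l) else 0 := fun i => by
    by_cases hi : k ≤ i
    · have := sum_range_ite_le_eq_sub (fun j => G (i + 1) j - G i j) hl
      simp only [hi, true_and, if_true, mixedDiff] at this ⊢
      rw [← sub_sub_sub_comm, ← this]
      exact sum_congr rfl fun j _ => by split_ifs <;> ring
    · simp [hi]
  rw [sum_product, sum_congr rfl fun i _ => hinner i,
    sum_range_ite_le_eq_sub (fun i => G i N - G i l) hk, sum_range_ite_le_eq_sub (G · N) hk,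
    sum_range_ite_le_eq_sub (G N ·) hl]
  ring

noncomputable def gridStepFn (s : ℕ → ℝ) (G : ℕ → ℕ → ℝ) (N : ℕ) (p : ℝ × ℝ) : ℝ :=
  G N N - ∑ i ∈ Finset.range N, (Iic (s i) ×ˢ univ).indicator (fun _ => G (i + 1) N - G i N) p
    - ∑ j ∈ Finset.range N, (univ ×ˢ Iic (s j)).indicator (fun _ => G N (j + 1) - G N j) p
    + ∑ ij ∈ Finset.range N ×ˢ Finset.range N,
        (Iic (s ij.1) ×ˢ Iic (s ij.2)).indicator (fun _ => mixedDiff G ij.1 ij.2) p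

lemma gridStepFn_eq {s : ℕ → ℝ} {G : ℕ → ℕ → ℝ} {N : ℕ} {idx : ℝ → ℕ}
    (hidx : ∀ u i, u ≤ s i ↔ idx u ≤ i) {p : ℝ × ℝ} (h1 : idx p.1 ≤ N) (h2 : idx p.2 ≤ N) :
    gridStepFn s G N p = G (idx p.1) (idx p.2) := by
  rw [eq_sub_sum_ite_add_sum_mixedDiff G h1 h2]
  simp only [gridStepFn, indicator_apply, mem_prod, mem_Iic, mem_univ, and_true, true_and, hidx]

section integral

variable {α ι : Type*} [MeasurableSpace α] (ν : Measure α) [IsFiniteMeasure ν] (t : Finset ι)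
  {S : ι → Set α} (hS : ∀ i, MeasurableSet (S i)) (c : ι → ℝ)
include hS

lemma integrable_sum_indicator_const :
    Integrable (fun p => ∑ i ∈ t, (S i).indicator (fun _ => c i) p) ν :=
  integrable_finsetSum _ fun i _ => (integrable_const _).indicator (hS i)

lemma integral_sum_indicator_const :
    ∫ p, ∑ i ∈ t, (S i).indicator (fun _ => c i) p ∂ν = ∑ i ∈ t, ν.real (S i) * c i := by
  rw [integral_finsetSum _ fun i _ => (integrable_const _).indicator (hS i)]
  simp only [integral_indicator_const _ (hS _), smul_eq_mul]

end integral

section gridStepFn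

variable (ν : Measure (ℝ × ℝ)) [IsProbabilityMeasure ν] (s : ℕ → ℝ) (G : ℕ → ℕ → ℝ) (N : ℕ)

lemma integrable_gridStepFn : Integrable (gridStepFn s G N) ν :=
  (((integrable_const _).sub (integrable_sum_indicator_const ν _
    (fun _ => measurableSet_Iic.prod MeasurableSet.univ) _)).sub
    (integrable_sum_indicator_const ν _ (fun _ => MeasurableSet.univ.prod measurableSet_Iic) _)).add
    (integrable_sum_indicator_const ν _ (fun _ => measurableSet_Iic.prod measurableSet_Iic) _)

lemma integral_gridStepFn :
    ∫ p, gridStepFn s G N p ∂ν = G N N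
      - ∑ i ∈ Finset.range N, ν.real (Iic (s i) ×ˢ univ) * (G (i + 1) N - G i N)
      - ∑ j ∈ Finset.range N, ν.real (univ ×ˢ Iic (s j)) * (G N (j + 1) - G N j)
      + ∑ ij ∈ Finset.range N ×ˢ Finset.range N,
          ν.real (Iic (s ij.1) ×ˢ Iic (s ij.2)) * mixedDiff G ij.1 ij.2 := by
  have h1 : ∀ i, MeasurableSet (Iic (s i) ×ˢ (univ : Set ℝ)) := fun _ =>
    measurableSet_Iic.prod MeasurableSet.univ
  have h2 : ∀ j, MeasurableSet ((univ : Set ℝ) ×ˢ Iic (s j)) := fun _ =>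
    MeasurableSet.univ.prod measurableSet_Iic
  have h3 : ∀ ij : ℕ × ℕ, MeasurableSet (Iic (s ij.1) ×ˢ Iic (s ij.2)) := fun _ =>
    measurableSet_Iic.prod measurableSet_Iic
  have hi1 := integrable_sum_indicator_const ν (Finset.range N) h1 fun i => G (i + 1) N - G i N
  have hi2 := integrable_sum_indicator_const ν (Finset.range N) h2 fun j => G N (j + 1) - G N j
  have hi3 := integrable_sum_indicator_const ν (Finset.range N ×ˢ Finset.range N) h3
    fun ij => mixedDiff G ij.1 ij.2
  unfold gridStepFn
  rw [integral_add ?_ hi3, integral_sub ?_ hi2, integral_sub (integrable_const _) hi1,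
    integral_sum_indicator_const ν _ h1, integral_sum_indicator_const ν _ h2,
    integral_sum_indicator_const ν _ h3, integral_const, probReal_univ, one_smul]
  · exact (integrable_const _).sub hi1
  · exact ((integrable_const _).sub hi1).sub hi2

end gridStepFn

theorem integral_gridStepFn_le {μ κ : Measure (ℝ × ℝ)} [IsProbabilityMeasure μ]
    [IsProbabilityMeasure κ] (hfst : κ.map Prod.fst = μ.map Prod.fst)
    (hsnd : κ.map Prod.snd = μ.map Prod.snd)
    (hcdf : ∀ u v, μ (Iic u ×ˢ Iic v) ≤ κ (Iic u ×ˢ Iic v)) (s : ℕ → ℝ) {G : ℕ → ℕ → ℝ}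
    (hG : ∀ i j, mixedDiff G i j ≤ 0) (N : ℕ) :
    ∫ p, gridStepFn s G N p ∂κ ≤ ∫ p, gridStepFn s G N p ∂μ := by
  have hfst' : ∀ x, κ.real (Iic x ×ˢ univ) = μ.real (Iic x ×ˢ univ) := fun x => by
    rw [prod_univ, ← map_measureReal_apply measurable_fst measurableSet_Iic, hfst,
      map_measureReal_apply measurable_fst measurableSet_Iic]
  have hsnd' : ∀ x, κ.real (univ ×ˢ Iic x) = μ.real (univ ×ˢ Iic x) := fun x => by
    rw [univ_prod, ← map_measureReal_apply measurable_snd measurableSet_Iic, hsnd,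
      map_measureReal_apply measurable_snd measurableSet_Iic]
  rw [integral_gridStepFn, integral_gridStepFn]
  simp only [hfst', hsnd']
  gcongr 1
  refine Finset.sum_le_sum fun ij _ => ?_
  exact mul_le_mul_of_nonpos_right (ENNReal.toReal_mono (measure_ne_top _ _) (hcdf _ _))
    (hG ij.1 ij.2)

lemma mixedDiff_nonpos {ψ : ℝ → ℝ → ℝ}
    (hsub : ∀ u₁ u₂ v₁ v₂ : ℝ, u₁ ≤ u₂ → v₁ ≤ v₂ → ψ u₁ v₁ + ψ u₂ v₂ ≤ ψ u₂ v₁ + ψ u₁ v₂)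
    {s : ℕ → ℝ} (hs : Monotone s) (i j : ℕ) : mixedDiff (fun i j => ψ (s i) (s j)) i j ≤ 0 := by
  have := hsub _ _ _ _ (hs i.le_succ) (hs j.le_succ)
  simp only [mixedDiff]
  linarith

lemma le_add_ceil_mul_iff {a h : ℝ} (hh : 0 < h) (u : ℝ) (i : ℕ) :
    u ≤ a + i * h ↔ ⌈(u - a) / h⌉₊ ≤ i := by
  rw [Nat.ceil_le, div_le_iff₀ hh]
  constructor <;> intro <;> linarith

lemma add_ceil_mul_lt {a h u : ℝ} (hh : 0 < h) (hu : a ≤ u) : a + ⌈(u - a) / h⌉₊ * h < u + h := by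
  have := mul_lt_mul_of_pos_right (Nat.ceil_lt_add_one (div_nonneg (sub_nonneg.2 hu) hh.le)) hh
  rw [add_mul, div_mul_cancel₀ _ hh.ne'] at this
  linarith

lemma integrable_of_ae_mem_isCompact {α : Type*} [TopologicalSpace α] [MeasurableSpace α]
    [OpensMeasurableSpace α] [T2Space α] {ν : Measure α} [IsFiniteMeasure ν] {f : α → ℝ}
    (hf : Continuous f) {K : Set α} (hK : IsCompact K) (h : ∀ᵐ p ∂ν, p ∈ K) : Integrable f ν := by
  rw [← Measure.restrict_eq_self_of_ae_mem h]
  exact hf.continuousOn.integrableOn_compact hK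

lemma integral_le_integral_add_of_ae_abs_sub_le {α : Type*} [MeasurableSpace α] {ν : Measure α}
    [IsProbabilityMeasure ν] {f g : α → ℝ} (hf : Integrable f ν) (hg : Integrable g ν) {ε : ℝ}
    (h : ∀ᵐ p ∂ν, |f p - g p| ≤ ε) : ∫ p, f p ∂ν ≤ ∫ p, g p ∂ν + ε := by
  calc ∫ p, f p ∂ν ≤ ∫ p, (g p + ε) ∂ν :=
        integral_mono_ae hf (hg.add (integrable_const ε))
          (h.mono fun p hp => by linarith [(abs_le.1 hp).2])
    _ = ∫ p, g p ∂ν + ε := by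
        rw [integral_add hg (integrable_const _), integral_const, probReal_univ, one_smul]

theorem exists_gridStepFn_approx (a b : ℝ) {ψ : ℝ → ℝ → ℝ}
    (hψ : Continuous fun p : ℝ × ℝ => ψ p.1 p.2) {ε : ℝ} (hε : 0 < ε) :
    ∃ (s : ℕ → ℝ) (N : ℕ), Monotone s ∧ ∀ p ∈ Icc a b ×ˢ Icc a b,
      |gridStepFn s (fun i j => ψ (s i) (s j)) N p - ψ p.1 p.2| ≤ ε := by
  obtain ⟨δ, hδ, hψδ⟩ := Metric.uniformContinuousOn_iff.1
    ((isCompact_Icc.prod isCompact_Icc).uniformContinuousOn_of_continuous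
      (s := Icc a (b + 1) ×ˢ Icc a (b + 1)) hψ.continuousOn) ε hε
  obtain ⟨h, hh, hhδ, hh1⟩ : ∃ h : ℝ, 0 < h ∧ h < δ ∧ h ≤ 1 :=
    ⟨min δ 1 / 2, by positivity, by linarith [min_le_left δ 1], by linarith [min_le_right δ 1]⟩
  set s : ℕ → ℝ := fun i => a + i * h
  -- `idx u` is the index of the first grid node `≥ u`
  set idx : ℝ → ℕ := fun u => ⌈(u - a) / h⌉₊
  have hidx : ∀ u i, u ≤ s i ↔ idx u ≤ i := le_add_ceil_mul_iff hh
  have hnode : ∀ u ∈ Icc a b,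
      idx u ≤ idx b ∧ s (idx u) ∈ Icc a (b + 1) ∧ |s (idx u) - u| < δ := by
    intro u hu
    have hle : u ≤ s (idx u) := (hidx u _).2 le_rfl
    have hlt : s (idx u) < u + h := add_ceil_mul_lt hh hu.1
    exact ⟨(hidx u _).1 (hu.2.trans ((hidx b _).2 le_rfl)),
      ⟨by linarith [hu.1], by linarith [hu.2]⟩, abs_lt.2 ⟨by linarith, by linarith⟩⟩
  refine ⟨s, idx b, fun i j hij => by simp only [s]; gcongr, ?_⟩
  rintro ⟨u, v⟩ ⟨hu, hv⟩
  obtain ⟨hu₁, hu₂, hu₃⟩ := hnode u hu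
  obtain ⟨hv₁, hv₂, hv₃⟩ := hnode v hv
  rw [gridStepFn_eq hidx hu₁ hv₁, ← Real.dist_eq]
  refine (hψδ (s (idx u), s (idx v)) ⟨hu₂, hv₂⟩ (u, v)
    ⟨⟨hu.1, by linarith [hu.2]⟩, ⟨hv.1, by linarith [hv.2]⟩⟩ ?_).le
  rw [Prod.dist_eq, Real.dist_eq, Real.dist_eq]
  exact max_lt hu₃ hv₃

theorem integral_le_integral_of_cdf_le {μ κ : Measure (ℝ × ℝ)} [IsProbabilityMeasure μ]
    [IsProbabilityMeasure κ] (hfst : κ.map Prod.fst = μ.map Prod.fst)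
    (hsnd : κ.map Prod.snd = μ.map Prod.snd)
    (hcdf : ∀ u v, μ (Iic u ×ˢ Iic v) ≤ κ (Iic u ×ˢ Iic v)) {a b : ℝ}
    (hμ : ∀ᵐ p ∂μ, p ∈ Icc a b ×ˢ Icc a b) (hκ : ∀ᵐ p ∂κ, p ∈ Icc a b ×ˢ Icc a b)
    {ψ : ℝ → ℝ → ℝ} (hψ : Continuous fun p : ℝ × ℝ => ψ p.1 p.2)
    (hsub : ∀ u₁ u₂ v₁ v₂ : ℝ, u₁ ≤ u₂ → v₁ ≤ v₂ → ψ u₁ v₁ + ψ u₂ v₂ ≤ ψ u₂ v₁ + ψ u₁ v₂) :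
    ∫ p, ψ p.1 p.2 ∂κ ≤ ∫ p, ψ p.1 p.2 ∂μ := by
  have hK : IsCompact (Icc a b ×ˢ Icc a b) := isCompact_Icc.prod isCompact_Icc
  refine le_of_forall_pos_le_add fun ε hε => ?_
  obtain ⟨s, N, hs, happrox⟩ := exists_gridStepFn_approx a b hψ (half_pos hε)
  set T := gridStepFn s (fun i j => ψ (s i) (s j)) N
  calc ∫ p, ψ p.1 p.2 ∂κ ≤ ∫ p, T p ∂κ + ε / 2 :=
        integral_le_integral_add_of_ae_abs_sub_le (integrable_of_ae_mem_isCompact hψ hK hκ)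
          (integrable_gridStepFn κ _ _ _)
          (hκ.mono fun p hp => by rw [abs_sub_comm]; exact happrox p hp)
    _ ≤ ∫ p, T p ∂μ + ε / 2 :=
        add_le_add_left (integral_gridStepFn_le hfst hsnd hcdf s (mixedDiff_nonpos hsub hs) N) _
    _ ≤ ∫ p, ψ p.1 p.2 ∂μ + ε / 2 + ε / 2 := by
        gcongr
        exact integral_le_integral_add_of_ae_abs_sub_le (integrable_gridStepFn μ _ _ _)
          (integrable_of_ae_mem_isCompact hψ hK hμ) (hμ.mono happrox)
    _ = ∫ p, ψ p.1 p.2 ∂μ + ε := by ring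

theorem measure_prod_le_min_map (π : Measure (ℝ × ℝ)) {A B : Set ℝ} (hA : MeasurableSet A)
    (hB : MeasurableSet B) : π (A ×ˢ B) ≤ min (π.map Prod.fst A) (π.map Prod.snd B) := by
  rw [Measure.map_apply measurable_fst hA, Measure.map_apply measurable_snd hB]
  exact le_min (measure_mono fun p hp => hp.1) (measure_mono fun p hp => hp.2)

lemma ae_mem_prod_of_ae_map {π : Measure (ℝ × ℝ)} {A B : Set ℝ}
    (hA : ∀ᵐ x ∂π.map Prod.fst, x ∈ A) (hB : ∀ᵐ y ∂π.map Prod.snd, y ∈ B) :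
    ∀ᵐ p ∂π, p ∈ A ×ˢ B := by
  filter_upwards [ae_of_ae_map measurable_fst.aemeasurable hA,
    ae_of_ae_map measurable_snd.aemeasurable hB] with p h₁ h₂
  exact ⟨h₁, h₂⟩

theorem lintegral_comonotoneCoupling_le_of_ae_mem_Icc (P Q : Measure ℝ) [IsProbabilityMeasure P]
    [IsProbabilityMeasure Q] {π : Measure (ℝ × ℝ)} [IsProbabilityMeasure π]
    (hfst : π.map Prod.fst = P) (hsnd : π.map Prod.snd = Q) {a b : ℝ}
    (hP : ∀ᵐ x ∂P, x ∈ Icc a b) (hQ : ∀ᵐ y ∂Q, y ∈ Icc a b) {ψ : ℝ → ℝ → ℝ}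
    (hψ0 : ∀ u v, 0 ≤ ψ u v) (hψ : Continuous fun p : ℝ × ℝ => ψ p.1 p.2)
    (hsub : ∀ u₁ u₂ v₁ v₂ : ℝ, u₁ ≤ u₂ → v₁ ≤ v₂ → ψ u₁ v₁ + ψ u₂ v₂ ≤ ψ u₂ v₁ + ψ u₁ v₂) :
    ∫⁻ p, ENNReal.ofReal (ψ p.1 p.2) ∂(comonotoneCoupling P Q)
      ≤ ∫⁻ p, ENNReal.ofReal (ψ p.1 p.2) ∂π := by
  have hκ₁ := comonotoneCoupling_map_fst P Q
  have hκ₂ := comonotoneCoupling_map_snd P Q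
  have hπbox : ∀ᵐ p ∂π, p ∈ Icc a b ×ˢ Icc a b :=
    ae_mem_prod_of_ae_map (by rwa [hfst]) (by rwa [hsnd])
  have hκbox : ∀ᵐ p ∂comonotoneCoupling P Q, p ∈ Icc a b ×ˢ Icc a b :=
    ae_mem_prod_of_ae_map (by rwa [hκ₁]) (by rwa [hκ₂])
  have hK : IsCompact (Icc a b ×ˢ Icc a b) := isCompact_Icc.prod isCompact_Icc
  rw [← ofReal_integral_eq_lintegral_ofReal (integrable_of_ae_mem_isCompact hψ hK hκbox)
      (ae_of_all _ fun p => hψ0 _ _),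
    ← ofReal_integral_eq_lintegral_ofReal (integrable_of_ae_mem_isCompact hψ hK hπbox)
      (ae_of_all _ fun p => hψ0 _ _)]
  refine ENNReal.ofReal_le_ofReal (integral_le_integral_of_cdf_le (hκ₁.trans hfst.symm)
    (hκ₂.trans hsnd.symm) (fun u v => ?_) hπbox hκbox hψ hsub)
  rw [comonotoneCoupling_Iic_prod_Iic, ← hfst, ← hsnd]
  exact measure_prod_le_min_map π measurableSet_Iic measurableSet_Iic

section collapseOutside

variable {α : Type*} [MeasurableSpace α]

noncomputable def collapseOutside (π : Measure α) (J : Set α) (c : α) : Measure α :=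
  π.restrict J + π Jᶜ • Measure.dirac c

variable (π : Measure α) {J : Set α} (c : α)

lemma collapseOutside_apply {S : Set α} (hS : MeasurableSet S) :
    collapseOutside π J c S = π (S ∩ J) + π Jᶜ * S.indicator 1 c := by
  simp only [collapseOutside, Measure.coe_add, Pi.add_apply, Measure.restrict_apply hS,
    Measure.smul_apply, smul_eq_mul, Measure.dirac_apply' _ hS]

lemma lintegral_collapseOutside_le {f : α → ℝ≥0∞} (hf : Measurable f) :
    ∫⁻ p, f p ∂collapseOutside π J c ≤ ∫⁻ p, f p ∂π + π Jᶜ * f c := by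
  rw [collapseOutside, lintegral_add_measure, lintegral_smul_measure, lintegral_dirac' _ hf,
    smul_eq_mul]
  gcongr
  exact Measure.restrict_le_self

variable (hJ : MeasurableSet J)
include hJ

lemma isProbabilityMeasure_collapseOutside [IsProbabilityMeasure π] :
    IsProbabilityMeasure (collapseOutside π J c) :=
  ⟨by rw [collapseOutside_apply π c MeasurableSet.univ, univ_inter, indicator_univ,
    Pi.one_apply, mul_one, measure_add_measure_compl hJ, measure_univ]⟩

lemma ae_mem_collapseOutside (hc : c ∈ J) : ∀ᵐ p ∂collapseOutside π J c, p ∈ J := by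
  rw [ae_iff, ← compl_def, collapseOutside_apply π c hJ.compl, compl_inter_self,
    indicator_of_notMem (notMem_compl_iff.2 hc)]
  simp

lemma abs_measureReal_collapseOutside_sub_le [IsFiniteMeasure π] {S : Set α}
    (hS : MeasurableSet S) : |(collapseOutside π J c).real S - π.real S| ≤ π.real Jᶜ := by
  have hcol : (collapseOutside π J c).real S
      = π.real (S ∩ J) + S.indicator (fun _ => π.real Jᶜ) c := by
    by_cases hc : c ∈ S <;>
      simp [hc, measureReal_def, collapseOutside_apply π c hS,
        ENNReal.toReal_add (measure_ne_top _ _) (measure_ne_top _ _)]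
  have hind : S.indicator (fun _ => π.real Jᶜ) c ∈ Icc 0 (π.real Jᶜ) := by
    by_cases hc : c ∈ S <;> simp [hc]
  have hle : π.real (S \ J) ≤ π.real Jᶜ := measureReal_mono fun p hp => hp.2
  rw [hcol, ← measureReal_inter_add_sdiff (s := S) hJ, abs_le]
  constructor <;> linarith [hind.1, hind.2, measureReal_nonneg (μ := π) (s := S \ J)]

lemma abs_cdf_map_collapseOutside_sub_le [IsProbabilityMeasure π] {f : α → ℝ} (hf : Measurable f)
    (z : ℝ) : |cdf ((collapseOutside π J c).map f) z - cdf (π.map f) z| ≤ π.real Jᶜ := by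
  have := isProbabilityMeasure_collapseOutside π c hJ
  have := Measure.isProbabilityMeasure_map (μ := π) hf.aemeasurable
  have := Measure.isProbabilityMeasure_map (μ := collapseOutside π J c) hf.aemeasurable
  rw [cdf_eq_real, cdf_eq_real, map_measureReal_apply hf measurableSet_Iic,
    map_measureReal_apply hf measurableSet_Iic]
  exact abs_measureReal_collapseOutside_sub_le π c hJ (hf measurableSet_Iic)

end collapseOutside

theorem lintegral_comonotoneCoupling_collapseOutside_le (π : Measure (ℝ × ℝ))
    [IsProbabilityMeasure π] {a b : ℝ} {c : ℝ × ℝ} (hc : c ∈ Icc a b ×ˢ Icc a b)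
    {ψ : ℝ → ℝ → ℝ} (hψ0 : ∀ u v, 0 ≤ ψ u v) (hψ : Continuous fun p : ℝ × ℝ => ψ p.1 p.2)
    (hsub : ∀ u₁ u₂ v₁ v₂ : ℝ, u₁ ≤ u₂ → v₁ ≤ v₂ → ψ u₁ v₁ + ψ u₂ v₂ ≤ ψ u₂ v₁ + ψ u₁ v₂) :
    ∫⁻ p, ENNReal.ofReal (ψ p.1 p.2) ∂(comonotoneCoupling
        ((collapseOutside π (Icc a b ×ˢ Icc a b) c).map Prod.fst)
        ((collapseOutside π (Icc a b ×ˢ Icc a b) c).map Prod.snd))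
      ≤ ∫⁻ p, ENNReal.ofReal (ψ p.1 p.2) ∂π
        + π (Icc a b ×ˢ Icc a b)ᶜ * ENNReal.ofReal (ψ c.1 c.2) := by
  have hJ : MeasurableSet (Icc a b ×ˢ Icc a b) := measurableSet_Icc.prod measurableSet_Icc
  have := isProbabilityMeasure_collapseOutside π c hJ
  have := Measure.isProbabilityMeasure_map
    (μ := collapseOutside π (Icc a b ×ˢ Icc a b) c) measurable_fst.aemeasurable
  have := Measure.isProbabilityMeasure_map
    (μ := collapseOutside π (Icc a b ×ˢ Icc a b) c) measurable_snd.aemeasurable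
  have hbox := ae_mem_collapseOutside π c hJ hc
  exact (lintegral_comonotoneCoupling_le_of_ae_mem_Icc _ _ rfl rfl
    ((ae_map_iff measurable_fst.aemeasurable measurableSet_Icc).2 (hbox.mono fun p hp => hp.1))
    ((ae_map_iff measurable_snd.aemeasurable measurableSet_Icc).2 (hbox.mono fun p hp => hp.2))
    hψ0 hψ hsub).trans
    (lintegral_collapseOutside_le π c (ENNReal.measurable_ofReal.comp hψ.measurable))

theorem tendsto_measure_compl_Icc_prod_Icc (π : Measure (ℝ × ℝ)) [IsFiniteMeasure π] :
    Tendsto (fun n : ℕ => π (Icc (-n : ℝ) n ×ˢ Icc (-n : ℝ) n)ᶜ) atTop (𝓝 0) := by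
  have hanti : Antitone fun n : ℕ => (Icc (-n : ℝ) n ×ˢ Icc (-n : ℝ) n)ᶜ :=
    fun m n hmn => compl_subset_compl.2 <| by
      have : (m : ℝ) ≤ n := Nat.cast_le.2 hmn
      exact prod_mono (Icc_subset_Icc (by linarith) this) (Icc_subset_Icc (by linarith) this)
  have hcover : ∀ p : ℝ × ℝ, ∃ n : ℕ, p ∉ (Icc (-n : ℝ) n ×ˢ Icc (-n : ℝ) n)ᶜ := fun p => by
    obtain ⟨n, hn⟩ := exists_nat_ge (max |p.1| |p.2|)
    exact ⟨n, notMem_compl_iff.2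
      ⟨abs_le.1 ((le_max_left _ _).trans hn), abs_le.1 ((le_max_right _ _).trans hn)⟩⟩
  have := tendsto_measure_iInter_atTop (μ := π)
    (fun n => (measurableSet_Icc.prod measurableSet_Icc).compl.nullMeasurableSet) hanti
    ⟨0, measure_ne_top _ _⟩
  rwa [iInter_eq_empty_iff.2 hcover, measure_empty] at this

theorem lintegral_comonotoneCoupling_le_liminf (P Q : Measure ℝ) [IsProbabilityMeasure P]
    [IsProbabilityMeasure Q] (Pn Qn : ℕ → Measure ℝ) [∀ n, IsProbabilityMeasure (Pn n)]
    [∀ n, IsProbabilityMeasure (Qn n)]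
    (hP : ∀ᵐ x ∂(volume.restrict (Ioo (0 : ℝ) 1)),
      Tendsto (fun n => quantileFn (Pn n) x) atTop (𝓝 (quantileFn P x)))
    (hQ : ∀ᵐ x ∂(volume.restrict (Ioo (0 : ℝ) 1)),
      Tendsto (fun n => quantileFn (Qn n) x) atTop (𝓝 (quantileFn Q x)))
    {f : ℝ × ℝ → ℝ≥0∞} (hf : Continuous f) :
    ∫⁻ p, f p ∂(comonotoneCoupling P Q)
      ≤ liminf (fun n => ∫⁻ p, f p ∂(comonotoneCoupling (Pn n) (Qn n))) atTop := by
  simp only [lintegral_comonotoneCoupling _ _ hf.measurable]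
  calc ∫⁻ x in Ioo 0 1, f (quantileFn P x, quantileFn Q x)
      = ∫⁻ x in Ioo 0 1, liminf (fun n => f (quantileFn (Pn n) x, quantileFn (Qn n) x)) atTop := by
        refine lintegral_congr_ae ?_
        filter_upwards [hP, hQ] with x hxP hxQ
        exact ((hf.tendsto _).comp (hxP.prodMk_nhds hxQ)).liminf_eq.symm
    _ ≤ _ := lintegral_liminf_le' fun n =>
        hf.measurable.comp_aemeasurable (aemeasurable_quantileFn_prod (Pn n) (Qn n))

theorem lintegral_comonotoneCoupling_le (P Q : Measure ℝ) [IsProbabilityMeasure P]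
    [IsProbabilityMeasure Q] {π : Measure (ℝ × ℝ)} [IsProbabilityMeasure π]
    (hfst : π.map Prod.fst = P) (hsnd : π.map Prod.snd = Q) {ψ : ℝ → ℝ → ℝ}
    (hψ0 : ∀ u v, 0 ≤ ψ u v) (hψ : Continuous fun p : ℝ × ℝ => ψ p.1 p.2)
    (hsub : ∀ u₁ u₂ v₁ v₂ : ℝ, u₁ ≤ u₂ → v₁ ≤ v₂ → ψ u₁ v₁ + ψ u₂ v₂ ≤ ψ u₂ v₁ + ψ u₁ v₂) :
    ∫⁻ p, ENNReal.ofReal (ψ p.1 p.2) ∂(comonotoneCoupling P Q)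
      ≤ ∫⁻ p, ENNReal.ofReal (ψ p.1 p.2) ∂π := by
  set J : ℕ → Set (ℝ × ℝ) := fun n => Icc (-n : ℝ) n ×ˢ Icc (-n : ℝ) n
  have hJ : ∀ n, MeasurableSet (J n) := fun n => measurableSet_Icc.prod measurableSet_Icc
  have h0J : ∀ n, ((0 : ℝ), (0 : ℝ)) ∈ J n := fun n =>
    ⟨⟨by simp, n.cast_nonneg⟩, ⟨by simp, n.cast_nonneg⟩⟩
  set πn := fun n => collapseOutside π (J n) (0, 0)
  have := fun n => isProbabilityMeasure_collapseOutside π (0, 0) (hJ n)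
  have : ∀ n, IsProbabilityMeasure ((πn n).map Prod.fst) := fun n =>
    Measure.isProbabilityMeasure_map measurable_fst.aemeasurable
  have : ∀ n, IsProbabilityMeasure ((πn n).map Prod.snd) := fun n =>
    Measure.isProbabilityMeasure_map measurable_snd.aemeasurable
  have htail := tendsto_measure_compl_Icc_prod_Icc π
  have hδ : Tendsto (fun n => π.real (J n)ᶜ) atTop (𝓝 0) := by
    have := (ENNReal.tendsto_toReal ENNReal.zero_ne_top).comp htail
    rwa [ENNReal.toReal_zero] at this
  have hcdf {f : ℝ × ℝ → ℝ} (hf : Measurable f) (n : ℕ) (z : ℝ) :=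
    abs_cdf_map_collapseOutside_sub_le π (0, 0) (hJ n) hf z
  calc ∫⁻ p, ENNReal.ofReal (ψ p.1 p.2) ∂(comonotoneCoupling P Q)
      ≤ liminf (fun n => ∫⁻ p, ENNReal.ofReal (ψ p.1 p.2) ∂(comonotoneCoupling
          ((πn n).map Prod.fst) ((πn n).map Prod.snd))) atTop :=
        lintegral_comonotoneCoupling_le_liminf P Q _ _
          (ae_tendsto_quantileFn_of_abs_cdf_sub_le P _ hδ (hfst ▸ hcdf measurable_fst))
          (ae_tendsto_quantileFn_of_abs_cdf_sub_le Q _ hδ (hsnd ▸ hcdf measurable_snd))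
          (ENNReal.continuous_ofReal.comp hψ)
    _ ≤ liminf (fun n => ∫⁻ p, ENNReal.ofReal (ψ p.1 p.2) ∂π
          + π (J n)ᶜ * ENNReal.ofReal (ψ 0 0)) atTop :=
        liminf_le_liminf (Eventually.of_forall fun n =>
          lintegral_comonotoneCoupling_collapseOutside_le π (h0J n) hψ0 hψ hsub)
    _ = ∫⁻ p, ENNReal.ofReal (ψ p.1 p.2) ∂π := by
        refine Tendsto.liminf_eq ?_
        have := (tendsto_const_nhds (x := ∫⁻ p, ENNReal.ofReal (ψ p.1 p.2) ∂π)).add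
          (ENNReal.Tendsto.mul_const htail (Or.inr (ENNReal.ofReal_ne_top (r := ψ 0 0))))
        rwa [zero_mul, add_zero] at this

/-- the comonotone coupling `𝔓^com` has first marginal `P` and
second marginal `Q`, its joint distribution function is
`F_{𝔓^com}(u,v) = min{F_P(u), F_Q(v)}`, and for every continuous quasi-antitone
cost `ψ̃ : ℝ × ℝ → [0,∞)` the minimum of `∫ ψ̃ dπ` over all couplings `π` of
`P` and `Q` is attained at `𝔓^com` and equals
`∫_{(0,1)} ψ̃(F_P^←(x), F_Q^←(x)) dλ_L(x)`. -/
theorem comonotone_coupling_optimal (P Q : Measure ℝ)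
    [IsProbabilityMeasure P] [IsProbabilityMeasure Q] :
    (comonotoneCoupling P Q).map Prod.fst = P
    ∧ (comonotoneCoupling P Q).map Prod.snd = Q
    ∧ (∀ u v : ℝ, comonotoneCoupling P Q (Set.Iic u ×ˢ Set.Iic v)
        = min (P (Set.Iic u)) (Q (Set.Iic v)))
    ∧ (∀ ψ : ℝ → ℝ → ℝ, (∀ u v, 0 ≤ ψ u v) →
        Continuous (fun p : ℝ × ℝ => ψ p.1 p.2) →
        (∀ u₁ u₂ v₁ v₂ : ℝ, u₁ ≤ u₂ → v₁ ≤ v₂ →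
          ψ u₁ v₁ + ψ u₂ v₂ ≤ ψ u₂ v₁ + ψ u₁ v₂) →
        (∫⁻ p, ENNReal.ofReal (ψ p.1 p.2) ∂(comonotoneCoupling P Q)
            = ∫⁻ x in Set.Ioo (0:ℝ) 1,
                ENNReal.ofReal (ψ (quantileFn P x) (quantileFn Q x)))
        ∧ ∀ π : Measure (ℝ × ℝ), IsProbabilityMeasure π →
            π.map Prod.fst = P → π.map Prod.snd = Q →
            ∫⁻ p, ENNReal.ofReal (ψ p.1 p.2) ∂(comonotoneCoupling P Q)
              ≤ ∫⁻ p, ENNReal.ofReal (ψ p.1 p.2) ∂π) := by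
  refine ⟨comonotoneCoupling_map_fst P Q, comonotoneCoupling_map_snd P Q,
    comonotoneCoupling_Iic_prod_Iic P Q, fun ψ hψ0 hψ hsub => ⟨?_, fun π _ hfst hsnd => ?_⟩⟩
  · exact lintegral_comonotoneCoupling P Q (ENNReal.measurable_ofReal.comp hψ.measurable)
  · exact lintegral_comonotoneCoupling_le P Q hfst hsnd hψ0 hψ hsub
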